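/- If a ∈ [0,1], a ≠ 1/2, the 2-periodic points of V_4 (points x with V_4(V_4(x)) = x and V_4(x) ≠ x) on S² are exactly e₂ = (0,1,0) and e₃ = (0,0,1). -/

import Mathlib

def V4 (a : ℝ) (p : ℝ × ℝ × ℝ) : ℝ × ℝ × ℝ :=
  (p.1^2 + 2*a*p.1*(1-p.1), p.2.2^2 + 2*(1-a)*p.1*(1-p.1), p.2.1^2 + 2*p.2.1*p.2.2)

def S2 : Set (ℝ × ℝ × ℝ) :=
  {p | 0 ≤ p.1 ∧ 0 ≤ p.2.1 ∧ 0 ≤ p.2.2 ∧ p.1 + p.2.1 + p.2.2 = 1}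

/-!
The first coordinate of `V4 a` evolves on its own, by the map `u ↦ u² + 2au(1-u)`, which is a
monotone self-map of `[0,1]`. A monotone map has no points of exact period two, so the first
coordinate of a 2-periodic point is a fixed point of this map, i.e. `0` or `1` when `a ≠ 1/2`.
The vertex `e₁` is fixed, and on the face `x = 0` the third coordinate evolves by `z ↦ 1 - z²`,
whose points of exact period two are `0` and `1`.
-/

open Set

theorem MonotoneOn.eq_of_apply_apply_eq {α : Type*} [LinearOrder α] {f : α → α}
    {s : Set α} (hf : MonotoneOn f s) {x : α} (hx : x ∈ s) (hfx : f x ∈ s) (h : f (f x) = x) :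
    f x = x := by
  rcases le_total (f x) x with hle | hle
  · have := hf hfx hx hle
    rw [h] at this
    exact le_antisymm hle this
  · have := hf hx hfx hle
    rw [h] at this
    exact le_antisymm this hle

namespace V4

def fstMap (a u : ℝ) : ℝ := u^2 + 2*a*u*(1-u)

variable {a : ℝ}

theorem fst_apply (p : ℝ × ℝ × ℝ) : (V4 a p).1 = fstMap a p.1 := rfl

theorem monotoneOn_fstMap (ha : a ∈ Icc (0:ℝ) 1) : MonotoneOn (fstMap a) (Icc 0 1) := by
  rintro u ⟨hu, -⟩ v ⟨-, hv⟩ huv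
  have key : fstMap a v - fstMap a u = (v - u) * (2*a*(1 - u - v) + (u + v)) := by
    unfold fstMap; ring
  have : 0 ≤ 2*a*(1 - u - v) + (u + v) := by nlinarith [ha.1, ha.2]
  nlinarith [mul_nonneg (sub_nonneg.2 huv) this]

theorem mapsTo_fstMap (ha : a ∈ Icc (0:ℝ) 1) : MapsTo (fstMap a) (Icc 0 1) (Icc 0 1) := by
  rintro u ⟨hu0, hu1⟩
  have h1 : 0 ≤ 2*a*u*(1-u) := by have := ha.1; positivity
  have h2 : 0 ≤ (1-a)*u*(1-u) := mul_nonneg (mul_nonneg (by linarith [ha.2]) hu0) (by linarith)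
  constructor <;> unfold fstMap <;> nlinarith [sq_nonneg (1-u)]

theorem fstMap_eq_self_iff (ha : a ≠ 1/2) {u : ℝ} : fstMap a u = u ↔ u = 0 ∨ u = 1 := by
  have h2a : 1 - 2*a ≠ 0 := fun h => ha (by linarith)
  have key : fstMap a u - u = (1 - 2*a) * (u * (u - 1)) := by unfold fstMap; ring
  rw [← sub_eq_zero, key, mul_eq_zero, or_iff_right h2a, mul_eq_zero, sub_eq_zero]

theorem fst_eq_zero_or_one_of_apply_apply_eq (ha : a ∈ Icc (0:ℝ) 1) (ha' : a ≠ 1/2)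
    {p : ℝ × ℝ × ℝ} (hp : p ∈ S2) (h : V4 a (V4 a p) = p) : p.1 = 0 ∨ p.1 = 1 := by
  obtain ⟨hx, hy, hz, hsum⟩ := hp
  have hx' : p.1 ∈ Icc (0:ℝ) 1 := ⟨hx, by linarith⟩
  rw [← fstMap_eq_self_iff ha']
  refine (monotoneOn_fstMap ha).eq_of_apply_apply_eq hx' (mapsTo_fstMap ha hx') ?_
  rw [← fst_apply, ← fst_apply, h]

theorem apply_zero_mk (y z : ℝ) (hyz : y + z = 1) : V4 a (0, y, z) = (0, z^2, 1 - z^2) := by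
  obtain rfl : y = 1 - z := by linarith
  simp only [V4, Prod.mk.injEq]
  refine ⟨?_, ?_, ?_⟩ <;> ring

end V4

theorem eq_zero_or_one_of_one_sub_sq_two_periodic {z : ℝ} (h : 1 - (1 - z^2)^2 = z)
    (hne : 1 - z^2 ≠ z) : z = 0 ∨ z = 1 := by
  have key : z * (z - 1) * (z^2 + z - 1) = 0 := by linear_combination -h
  have hfix : z^2 + z - 1 ≠ 0 := fun h' => hne (by linear_combination -h')
  rcases mul_eq_zero.1 ((mul_eq_zero.1 key).resolve_right hfix) with h0 | h1
  · exact Or.inl h0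
  · exact Or.inr (by linarith)

theorem V4_two_periodic (a : ℝ) (ha : a ∈ Set.Icc (0:ℝ) 1) (ha' : a ≠ 1/2) :
    {p ∈ S2 | V4 a (V4 a p) = p ∧ V4 a p ≠ p} =
      {((0:ℝ),(1:ℝ),(0:ℝ)), ((0:ℝ),(0:ℝ),(1:ℝ))} := by
  ext p
  constructor
  · rintro ⟨hp, hper, hne⟩
    obtain ⟨x, y, z⟩ := p
    rcases V4.fst_eq_zero_or_one_of_apply_apply_eq ha ha' hp hper with rfl | rfl
    · obtain ⟨-, -, -, hsum⟩ := hp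
      have hyz : y + z = 1 := by simpa using hsum
      rw [V4.apply_zero_mk y z hyz] at hper hne
      rw [V4.apply_zero_mk _ _ (by ring), Prod.mk.injEq, Prod.mk.injEq] at hper
      have hnfix : 1 - z^2 ≠ z := fun h => hne (by rw [h, show z^2 = y by linarith])
      rcases eq_zero_or_one_of_one_sub_sq_two_periodic hper.2.2 hnfix with rfl | rfl
      · obtain rfl : y = 1 := by linarith
        exact Or.inl rfl
      · obtain rfl : y = 0 := by linarith
        exact Or.inr rfl
    · obtain ⟨-, hy, hz, hsum⟩ := hp
      dsimp only at hy hz hsum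
      obtain ⟨rfl, rfl⟩ : y = 0 ∧ z = 0 := by constructor <;> linarith
      exact absurd (by norm_num [V4]) hne
  · rintro (rfl | rfl) <;> refine ⟨by norm_num [S2], by norm_num [V4], by norm_num [V4]⟩
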